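/- arXiv:1408.5369 — 6 statements merged into one kernel-verified Lean document; each statement's English description precedes it below -/
import Mathlib

section
/- Let u and v be distinct unit vectors in ℝ^p with at most k nonzero entries each, and suppose the difference vvᵀ - uuᵀ is nonzero. Then the matrix (vvᵀ - uuᵀ)/‖vvᵀ - uuᵀ‖₂ has rank 2, trace 0, and its nonzero eigenvalues are +1/√2 and -1/√2; consequently it can be written as (xxᵀ - yyᵀ)/√2 for some unit vectors x, y each having at most 2k nonzero entries. -/
/-
Write `a = u ⬝ᵥ v`. Expanding the Frobenius norm gives `‖vvᵀ - uuᵀ‖² = 2(1 - a²)`, so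
`a² < 1` and `v + u`, `v - u` are nonzero and orthogonal, of squared lengths `2(1 ± a)`.
Since `vvᵀ - uuᵀ = ((v + u)(v - u)ᵀ + (v - u)(v + u)ᵀ)/2`, normalising them to `s`, `d` gives
`vvᵀ - uuᵀ = √(1 - a²) (sdᵀ + dsᵀ) = √(1 - a²) (xxᵀ - yyᵀ)` with the orthonormal pair
`x, y = (s ± d)/√2`, which are linear combinations of `u` and `v` and hence `2k`-sparse.
Dividing by the norm leaves `(xxᵀ - yyᵀ)/√2`, whose range is spanned by its eigenvectors
`x` and `y` (eigenvalues `±1/√2`).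
-/

open Matrix Finset
open scoped Classical

section Orthonormal

variable {K n : Type*} [Field K] [Fintype n] {x y : n → K}

lemma vecMulVec_sub_vecMulVec_mulVec_left (hx : x ⬝ᵥ x = 1) (hxy : x ⬝ᵥ y = 0) :
    (vecMulVec x x - vecMulVec y y) *ᵥ x = x := by
  simp [sub_mulVec, vecMulVec_mulVec, hx, dotProduct_comm y x, hxy]

lemma vecMulVec_sub_vecMulVec_mulVec_right (hy : y ⬝ᵥ y = 1) (hxy : x ⬝ᵥ y = 0) :
    (vecMulVec x x - vecMulVec y y) *ᵥ y = -y := by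
  simp [sub_mulVec, vecMulVec_mulVec, hy, hxy]

lemma linearIndependent_pair_of_orthonormal (hx : x ⬝ᵥ x = 1) (hy : y ⬝ᵥ y = 1)
    (hxy : x ⬝ᵥ y = 0) : LinearIndependent K ![x, y] := by
  refine LinearIndependent.pair_iff.mpr fun s t hst => ⟨?_, ?_⟩
  · simpa [add_dotProduct, hx, dotProduct_comm y x, hxy] using congrArg (· ⬝ᵥ x) hst
  · simpa [add_dotProduct, hy, hxy] using congrArg (· ⬝ᵥ y) hst

lemma range_vecMulVec_sub_vecMulVec (hx : x ⬝ᵥ x = 1) (hy : y ⬝ᵥ y = 1) (hxy : x ⬝ᵥ y = 0) :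
    LinearMap.range (vecMulVec x x - vecMulVec y y).mulVecLin = Submodule.span K {x, y} := by
  apply le_antisymm
  · rintro _ ⟨w, rfl⟩
    refine Submodule.mem_span_pair.mpr ⟨x ⬝ᵥ w, -(y ⬝ᵥ w), ?_⟩
    simp [vecMulVec_mulVec, sub_eq_add_neg]
  · rw [Submodule.span_le, Set.insert_subset_iff, Set.singleton_subset_iff]
    exact ⟨⟨x, vecMulVec_sub_vecMulVec_mulVec_left hx hxy⟩,
      ⟨-y, by
        rw [mulVecLin_apply, mulVec_neg, vecMulVec_sub_vecMulVec_mulVec_right hy hxy, neg_neg]⟩⟩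

lemma rank_vecMulVec_sub_vecMulVec (hx : x ⬝ᵥ x = 1) (hy : y ⬝ᵥ y = 1) (hxy : x ⬝ᵥ y = 0) :
    (vecMulVec x x - vecMulVec y y).rank = 2 := by
  rw [rank, range_vecMulVec_sub_vecMulVec hx hy hxy, ← Matrix.range_cons_cons_empty,
    finrank_span_eq_card (linearIndependent_pair_of_orthonormal hx hy hxy), Fintype.card_fin]

end Orthonormal

lemma card_support_smul_add_smul_le {R n : Type*} [Semiring R] [Fintype n] (a b : R)
    (v u : n → R) :
    #{j | (a • v + b • u) j ≠ 0} ≤ #{j | v j ≠ 0} + #{j | u j ≠ 0} := by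
  refine (card_le_card fun j hj => ?_).trans (card_union_le _ _)
  contrapose! hj
  simp_all

lemma sum_sum_sq_mul_sub_mul {R n : Type*} [CommRing R] [Fintype n] (u v : n → R) :
    ∑ i, ∑ j, (v i * v j - u i * u j) ^ 2 = (v ⬝ᵥ v) ^ 2 + (u ⬝ᵥ u) ^ 2 - 2 * (u ⬝ᵥ v) ^ 2 := by
  calc ∑ i, ∑ j, (v i * v j - u i * u j) ^ 2
      = ∑ i, ∑ j, (v i * v i * (v j * v j) + u i * u i * (u j * u j)
          - 2 * (u i * v i * (u j * v j))) :=
        Finset.sum_congr rfl fun i _ => Finset.sum_congr rfl fun j _ => by ring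
    _ = _ := by
        simp only [dotProduct, sq, Finset.sum_mul_sum]
        simp only [Finset.mul_sum, Finset.sum_add_distrib, Finset.sum_sub_distrib]

/- For `τ = (1 + u ⬝ᵥ v)^(-1/2)` and `σ = (1 - u ⬝ᵥ v)^(-1/2)`, `x` and `y` are `(s ± d) / √2`
for the orthonormal pair `s, d` obtained by normalising `v + u` and `v - u`. -/
lemma eigenbasis_vecMulVec_sub_vecMulVec {R n : Type*} [Field R] [CharZero R] [Fintype n]
    {u v : n → R} (hu : u ⬝ᵥ u = 1) (hv : v ⬝ᵥ v = 1) {τ σ : R}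
    (hτ : τ ^ 2 * (1 + u ⬝ᵥ v) = 1) (hσ : σ ^ 2 * (1 - u ⬝ᵥ v) = 1) :
    let x := ((τ + σ) / 2) • v + ((τ - σ) / 2) • u
    let y := ((τ - σ) / 2) • v + ((τ + σ) / 2) • u
    x ⬝ᵥ x = 1 ∧ y ⬝ᵥ y = 1 ∧ x ⬝ᵥ y = 0 ∧
      vecMulVec x x - vecMulVec y y = (τ * σ) • (vecMulVec v v - vecMulVec u u) := by
  intro x y
  have hvu : v ⬝ᵥ u = u ⬝ᵥ v := dotProduct_comm v u
  simp only [x, y, add_dotProduct, dotProduct_add, smul_dotProduct, dotProduct_smul, smul_eq_mul,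
    hu, hv, hvu]
  refine ⟨by linear_combination (hτ + hσ) / 2, by linear_combination (hτ + hσ) / 2,
    by linear_combination (hτ - hσ) / 2, ?_⟩
  ext i j
  simp only [Matrix.sub_apply, vecMulVec_apply, Matrix.smul_apply, Pi.add_apply, Pi.smul_apply,
    smul_eq_mul]
  ring

lemma exists_orthonormal_vecMulVec_sub_vecMulVec_eq {n : Type*} [Fintype n] {u v : n → ℝ}
    (hu : u ⬝ᵥ u = 1) (hv : v ⬝ᵥ v = 1) (huv : (u ⬝ᵥ v) ^ 2 < 1) :
    ∃ x y : n → ℝ, x ⬝ᵥ x = 1 ∧ y ⬝ᵥ y = 1 ∧ x ⬝ᵥ y = 0 ∧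
      #{j | x j ≠ 0} ≤ #{j | v j ≠ 0} + #{j | u j ≠ 0} ∧
      #{j | y j ≠ 0} ≤ #{j | v j ≠ 0} + #{j | u j ≠ 0} ∧
      vecMulVec v v - vecMulVec u u = √(1 - (u ⬝ᵥ v) ^ 2) • (vecMulVec x x - vecMulVec y y) := by
  set a := u ⬝ᵥ v
  have hplus : 0 < 1 + a := by nlinarith
  have hminus : 0 < 1 - a := by nlinarith
  obtain ⟨hx, hy, hxy, hdiff⟩ := eigenbasis_vecMulVec_sub_vecMulVec hu hv
    (τ := (√(1 + a))⁻¹) (σ := (√(1 - a))⁻¹)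
    (by rw [inv_pow, Real.sq_sqrt hplus.le, inv_mul_cancel₀ hplus.ne'])
    (by rw [inv_pow, Real.sq_sqrt hminus.le, inv_mul_cancel₀ hminus.ne'])
  refine ⟨_, _, hx, hy, hxy, card_support_smul_add_smul_le _ _ _ _,
    card_support_smul_add_smul_le _ _ _ _, ?_⟩
  have hsqrt : √(1 - a ^ 2) = √(1 + a) * √(1 - a) := by
    rw [← Real.sqrt_mul hplus.le]
    ring_nf
  rw [hdiff, smul_smul, hsqrt, ← mul_inv, mul_inv_cancel₀ (by positivity), one_smul]

lemma sum_sq_eq_dotProduct_self {R n : Type*} [CommSemiring R] [Fintype n] (x : n → R) :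
    ∑ i, x i ^ 2 = x ⬝ᵥ x := by
  simp only [dotProduct, sq]

lemma sum_sum_sq_pos {m n : Type*} [Fintype m] [Fintype n] {A : Matrix m n ℝ} (hA : A ≠ 0) :
    0 < ∑ i, ∑ j, A i j ^ 2 := by
  obtain ⟨i, j, hij⟩ : ∃ i j, A i j ≠ 0 := by
    by_contra! h
    exact hA (Matrix.ext h)
  exact Finset.sum_pos' (fun _ _ => by positivity)
    ⟨i, mem_univ _, Finset.sum_pos' (fun _ _ => by positivity) ⟨j, mem_univ _, by positivity⟩⟩

/-- For distinct sparse unit vectors `u, v`, the normalised difference of projections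
`(vvᵀ - uuᵀ)/‖vvᵀ - uuᵀ‖₂` has rank 2, trace 0, nonzero eigenvalues `±1/√2`, and can be
written as `(xxᵀ - yyᵀ)/√2` for unit vectors `x, y` with at most `2k` nonzero entries. -/
theorem stmt_5 (p k : ℕ) (u v : Fin p → ℝ)
    (hu : ∑ i, u i ^ 2 = 1) (hv : ∑ i, v i ^ 2 = 1)
    (hu0 : (Finset.univ.filter (fun j => u j ≠ 0)).card ≤ k)
    (hv0 : (Finset.univ.filter (fun j => v j ≠ 0)).card ≤ k)
    (hne : (fun i j => v i * v j - u i * u j) ≠ (0 : Matrix (Fin p) (Fin p) ℝ)) :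
    ∀ M : Matrix (Fin p) (Fin p) ℝ,
      M = (Real.sqrt (∑ i, ∑ j, (v i * v j - u i * u j) ^ 2))⁻¹ •
            (fun i j => v i * v j - u i * u j) →
      M.rank = 2 ∧ M.trace = 0 ∧
      ∃ x y : Fin p → ℝ,
        (∑ i, x i ^ 2 = 1) ∧ (∑ i, y i ^ 2 = 1) ∧
        (Finset.univ.filter (fun j => x j ≠ 0)).card ≤ 2 * k ∧
        (Finset.univ.filter (fun j => y j ≠ 0)).card ≤ 2 * k ∧
        (∑ i, x i * y i = 0) ∧
        M.mulVec x = (1 / Real.sqrt 2) • x ∧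
        M.mulVec y = (-(1 / Real.sqrt 2)) • y ∧
        M = (1 / Real.sqrt 2) • (fun i j => x i * x j - y i * y j) := by
  intro M hM
  rw [sum_sq_eq_dotProduct_self] at hu hv
  have hnorm : ∑ i, ∑ j, (v i * v j - u i * u j) ^ 2 = 2 * (1 - (u ⬝ᵥ v) ^ 2) := by
    rw [sum_sum_sq_mul_sub_mul, hu, hv]
    ring
  have huv : (u ⬝ᵥ v) ^ 2 < 1 := by nlinarith [sum_sum_sq_pos hne]
  obtain ⟨x, y, hx, hy, hxy, hxs, hys, hdiff⟩ :=
    exists_orthonormal_vecMulVec_sub_vecMulVec_eq hu hv huv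
  have hMxy : M = (1 / √2) • (vecMulVec x x - vecMulVec y y) := by
    have hM' : M = (√(2 * (1 - (u ⬝ᵥ v) ^ 2)))⁻¹ • (vecMulVec v v - vecMulVec u u) := by
      rw [hM, hnorm]
      rfl
    have hpos : 0 < √(1 - (u ⬝ᵥ v) ^ 2) := Real.sqrt_pos.mpr (by linarith)
    rw [hM', hdiff, smul_smul, Real.sqrt_mul zero_le_two]
    field_simp
  refine ⟨?_, ?_, x, y, by rwa [sum_sq_eq_dotProduct_self], by rwa [sum_sq_eq_dotProduct_self],
    hxs.trans (by omega), hys.trans (by omega), hxy, ?_, ?_, hMxy⟩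
  · rw [hMxy, rank_smul_of_mem_nonZeroDivisors _ (mem_nonZeroDivisors_of_ne_zero (by positivity)),
      rank_vecMulVec_sub_vecMulVec hx hy hxy]
  · rw [hMxy, trace_smul, trace_sub, trace_vecMulVec, trace_vecMulVec, hx, hy, sub_self, smul_zero]
  · rw [hMxy, smul_mulVec, vecMulVec_sub_vecMulVec_mulVec_left hx hxy]
  · rw [hMxy, smul_mulVec, vecMulVec_sub_vecMulVec_mulVec_right hy hxy, smul_neg, neg_smul]
end

section
/- Let Σ ∈ ℝ^{p×p} be of the form Σ = σ²I_p + θ·uuᵀ for a unit vector u, σ² > 0 and θ > 0, and let v be another unit vector. Then the Kullback–Leibler divergence between N_p(0, σ²I_p + θvvᵀ) and N_p(0, σ²I_p + θuuᵀ) equals (θ²/(2σ²(σ²+θ)))·(1 - (uᵀv)²). -/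
/-!
For centred Gaussians, `log (f_{S'} / f_S)` is a constant plus the quadratic form of
`(S⁻¹ - S'⁻¹) / 2`, and the second moments of `N(0, S')` are the entries of `S'`; hence
`D(N(0, S') ‖ N(0, S)) = (tr (S⁻¹ S') - p + log (det S / det S')) / 2`. The moments are computed
by writing `S' = Bᵀ B` and substituting `x = Bᵀ y`, which turns `f_{S'}` into the standard
Gaussian density, a product of one-dimensional ones.

For the spiked matrices the determinants agree, and Sherman–Morrison gives
`(σ² I + θ u uᵀ)⁻¹ = σ⁻² I - θ / (σ² (σ² + θ)) u uᵀ`, whence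
`tr ((σ² I + θ u uᵀ)⁻¹ (σ² I + θ v vᵀ)) - p = θ² (1 - (uᵀv)²) / (σ² (σ² + θ))`.
-/

open Matrix MeasureTheory Finset Real ProbabilityTheory

lemma integrable_pow_mul_exp_neg_sq_div_two (n : ℕ) :
    Integrable fun x : ℝ => x ^ n * exp (-x ^ 2 / 2) := by
  simpa [neg_div, div_eq_inv_mul] using integrable_rpow_mul_exp_neg_mul_sq
    (by norm_num : (0:ℝ) < 1 / 2) (s := n) (by linarith [n.cast_nonneg (α := ℝ)])

lemma integral_exp_neg_sq_div_two : ∫ x : ℝ, exp (-x ^ 2 / 2) = √(2 * π) := by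
  simpa [neg_div, div_eq_inv_mul] using integral_gaussian (1 / 2)

lemma integral_mul_exp_neg_sq_div_two : ∫ x : ℝ, x * exp (-x ^ 2 / 2) = 0 := by
  have h := integral_neg_eq_self (fun x : ℝ => x * exp (-x ^ 2 / 2)) volume
  simp only [neg_mul, even_two, Even.neg_pow, integral_neg] at h
  linarith

lemma integral_sq_mul_exp_neg_sq_div_two : ∫ x : ℝ, x ^ 2 * exp (-x ^ 2 / 2) = √(2 * π) := by
  have h := variance_fun_id_gaussianReal (μ := 0) (v := 1)
  rw [variance_eq_integral measurable_id'.aemeasurable, integral_id_gaussianReal,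
    integral_gaussianReal_eq_integral_smul one_ne_zero] at h
  simp only [gaussianPDFReal_def, sub_zero, NNReal.coe_one, mul_one, smul_eq_mul, mul_assoc] at h
  rw [integral_const_mul, inv_mul_eq_one₀ (by positivity)] at h
  simpa [mul_comm] using h.symm

variable {ι : Type*} [Fintype ι]

section StandardGaussian

lemma exp_neg_dotProduct_self_div_two (y : ι → ℝ) :
    exp (-(y ⬝ᵥ y) / 2) = ∏ k, exp (-y k ^ 2 / 2) := by
  simp only [dotProduct, ← exp_sum, ← sum_div, ← sum_neg_distrib, sq]

lemma integrable_exp_neg_dotProduct_self_div_two :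
    Integrable fun y : ι → ℝ => exp (-(y ⬝ᵥ y) / 2) := by
  simp only [exp_neg_dotProduct_self_div_two]
  exact Integrable.fintype_prod (f := fun _ t => exp (-t ^ 2 / 2)) fun _ => by
    simpa using integrable_pow_mul_exp_neg_sq_div_two 0

lemma integral_exp_neg_dotProduct_self_div_two :
    ∫ y : ι → ℝ, exp (-(y ⬝ᵥ y) / 2) = √(2 * π) ^ Fintype.card ι := by
  simp only [exp_neg_dotProduct_self_div_two, integral_fintype_prod_volume_eq_pow
    (fun t : ℝ => exp (-t ^ 2 / 2)), integral_exp_neg_sq_div_two]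

lemma dotProduct_mulVec_eq_sum (C : Matrix ι ι ℝ) (y : ι → ℝ) :
    y ⬝ᵥ C *ᵥ y = ∑ i, ∑ j, C i j * (y i * y j) := by
  simp only [dotProduct, mulVec, mul_sum]
  exact sum_congr rfl fun i _ => sum_congr rfl fun j _ => by ring

variable [DecidableEq ι]

lemma mul_mul_exp_neg_dotProduct_self_div_two (i j : ι) (y : ι → ℝ) :
    y i * y j * exp (-(y ⬝ᵥ y) / 2) =
      ∏ k, (if k = i then y k else 1) * (if k = j then y k else 1) * exp (-y k ^ 2 / 2) := by
  rw [prod_mul_distrib, prod_mul_distrib, prod_ite_eq', prod_ite_eq',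
    exp_neg_dotProduct_self_div_two]
  simp

lemma integrable_mul_mul_exp_neg_dotProduct_self_div_two (i j : ι) :
    Integrable fun y : ι → ℝ => y i * y j * exp (-(y ⬝ᵥ y) / 2) := by
  simp only [mul_mul_exp_neg_dotProduct_self_div_two i j]
  refine Integrable.fintype_prod (f := fun k (t : ℝ) =>
    (if k = i then t else 1) * (if k = j then t else 1) * exp (-t ^ 2 / 2)) fun k => ?_
  convert integrable_pow_mul_exp_neg_sq_div_two
    ((if k = i then 1 else 0) + if k = j then 1 else 0) using 3 with t
  split_ifs <;> ring

lemma integral_mul_mul_exp_neg_dotProduct_self_div_two (i j : ι) :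
    ∫ y : ι → ℝ, y i * y j * exp (-(y ⬝ᵥ y) / 2) =
      if i = j then √(2 * π) ^ Fintype.card ι else 0 := by
  simp only [mul_mul_exp_neg_dotProduct_self_div_two i j]
  rw [integral_fintype_prod_volume_eq_prod (f := fun k (t : ℝ) =>
    (if k = i then t else 1) * (if k = j then t else 1) * exp (-t ^ 2 / 2))]
  split_ifs with hij
  · subst hij
    refine (Fintype.prod_congr _ (fun _ => √(2 * π)) fun k => ?_).trans
      (by rw [prod_const, card_univ])
    by_cases hk : k = i
    · simpa only [if_pos hk, ← sq] using integral_sq_mul_exp_neg_sq_div_two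
    · simpa only [if_neg hk, one_mul] using integral_exp_neg_sq_div_two
  · refine prod_eq_zero (mem_univ i) ?_
    simpa [hij] using integral_mul_exp_neg_sq_div_two

lemma integrable_dotProduct_mulVec_mul_exp_neg_dotProduct_self_div_two (C : Matrix ι ι ℝ) :
    Integrable fun y : ι → ℝ => (y ⬝ᵥ C *ᵥ y) * exp (-(y ⬝ᵥ y) / 2) := by
  simp only [dotProduct_mulVec_eq_sum, sum_mul, mul_assoc (C _ _)]
  exact integrable_finsetSum _ fun i _ => integrable_finsetSum _ fun j _ =>
    (integrable_mul_mul_exp_neg_dotProduct_self_div_two i j).const_mul _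

lemma integral_dotProduct_mulVec_mul_exp_neg_dotProduct_self_div_two (C : Matrix ι ι ℝ) :
    ∫ y : ι → ℝ, (y ⬝ᵥ C *ᵥ y) * exp (-(y ⬝ᵥ y) / 2) =
      C.trace * √(2 * π) ^ Fintype.card ι := by
  simp only [dotProduct_mulVec_eq_sum, sum_mul, mul_assoc (C _ _)]
  rw [integral_finsetSum univ fun i _ => integrable_finsetSum univ fun j _ =>
    (integrable_mul_mul_exp_neg_dotProduct_self_div_two i j).const_mul (C i j)]
  refine (sum_congr rfl fun i _ => integral_finsetSum univ fun j _ =>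
    (integrable_mul_mul_exp_neg_dotProduct_self_div_two i j).const_mul (C i j)).trans ?_
  simp_rw [integral_const_mul, integral_mul_mul_exp_neg_dotProduct_self_div_two, mul_ite,
    mul_zero, sum_ite_eq, mem_univ, if_true, trace, Matrix.diag, sum_mul]

end StandardGaussian

section LinearChangeOfVariables

variable [DecidableEq ι]

lemma measurableEmbedding_mulVec {M : Matrix ι ι ℝ} (hM : M.det ≠ 0) :
    MeasurableEmbedding (M *ᵥ ·) :=
  ((toLin' M).equivOfDetNeZero (by rwa [LinearMap.det_toLin'])).toContinuousLinearEquiv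
    |>.toHomeomorph.measurableEmbedding

lemma map_mulVec_volume {M : Matrix ι ι ℝ} (hM : M.det ≠ 0) :
    Measure.map (M *ᵥ ·) volume = ENNReal.ofReal |M.det⁻¹| • volume := by
  have h := Real.map_linearMap_volume_pi_eq_smul_volume_pi (f := toLin' M)
    (by rwa [LinearMap.det_toLin'])
  rwa [LinearMap.det_toLin'] at h

variable {E : Type*} [NormedAddCommGroup E]

lemma integral_comp_mulVec [NormedSpace ℝ E] {M : Matrix ι ι ℝ} (hM : M.det ≠ 0)
    (g : (ι → ℝ) → E) :
    ∫ y, g (M *ᵥ y) = |M.det|⁻¹ • ∫ x, g x := by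
  rw [← (measurableEmbedding_mulVec hM).integral_map, map_mulVec_volume hM,
    integral_smul_measure, ENNReal.toReal_ofReal (by positivity), abs_inv]

lemma integrable_comp_mulVec_iff {M : Matrix ι ι ℝ} (hM : M.det ≠ 0) {g : (ι → ℝ) → E} :
    Integrable (fun y => g (M *ᵥ y)) ↔ Integrable g := by
  rw [← Function.comp_def, ← (measurableEmbedding_mulVec hM).integrable_map_iff,
    map_mulVec_volume hM, integrable_smul_measure (by simpa using hM) ENNReal.ofReal_ne_top]

end LinearChangeOfVariables

section GaussianDensity

variable [DecidableEq ι]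

/-- The Lebesgue density of `N(0, S)` for positive definite `S`; for other `S` the inverse and
the real power take junk values. -/
noncomputable def gaussianDensity (S : Matrix ι ι ℝ) (x : ι → ℝ) : ℝ :=
  ((2 * π) ^ Fintype.card ι * S.det) ^ (-(1:ℝ) / 2) * exp (-(x ⬝ᵥ S⁻¹ *ᵥ x) / 2)

open scoped MatrixOrder in
lemma Matrix.PosDef.exists_transpose_mul_self_eq {S : Matrix ι ι ℝ} (hS : S.PosDef) :
    ∃ B : Matrix ι ι ℝ, B.det ≠ 0 ∧ Bᵀ * B = S := by
  obtain ⟨B, rfl⟩ := CStarAlgebra.nonneg_iff_eq_star_mul_self.mp hS.posSemidef.nonneg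
  have hdet := hS.det_pos
  rw [star_eq_conjTranspose, conjTranspose_eq_transpose_of_trivial] at hdet ⊢
  rw [det_mul, det_transpose] at hdet
  exact ⟨B, fun h => by simp [h] at hdet, rfl⟩

omit [DecidableEq ι] in
lemma transpose_mulVec_dotProduct_mulVec (A B : Matrix ι ι ℝ) (y : ι → ℝ) :
    Bᵀ *ᵥ y ⬝ᵥ A *ᵥ Bᵀ *ᵥ y = y ⬝ᵥ (B * A * Bᵀ) *ᵥ y := by
  rw [← mulVec_mulVec, ← mulVec_mulVec, dotProduct_mulVec y, mulVec_transpose]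

lemma gaussianDensity_transpose_mul_self_mulVec {B : Matrix ι ι ℝ} (hB : B.det ≠ 0)
    (y : ι → ℝ) :
    gaussianDensity (Bᵀ * B) (Bᵀ *ᵥ y) =
      |B.det|⁻¹ * ((√(2 * π) ^ Fintype.card ι)⁻¹ * exp (-(y ⬝ᵥ y) / 2)) := by
  have hquad : Bᵀ *ᵥ y ⬝ᵥ (Bᵀ * B)⁻¹ *ᵥ Bᵀ *ᵥ y = y ⬝ᵥ y := by
    have hBu : IsUnit B.det := hB.isUnit
    rw [Matrix.mul_inv_rev, ← mulVec_mulVec, mulVec_mulVec _ (Bᵀ)⁻¹,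
      nonsing_inv_mul _ (by simpa using hBu), one_mulVec, mulVec_transpose, ← dotProduct_mulVec,
      mulVec_mulVec, mul_nonsing_inv _ hBu, one_mulVec]
  have hsq : (2 * π) ^ Fintype.card ι * (Bᵀ * B).det =
      (√(2 * π) ^ Fintype.card ι * |B.det|) ^ 2 := by
    rw [det_mul, det_transpose, mul_pow _ |B.det|, sq_abs, ← pow_mul, mul_comm _ 2, pow_mul,
      sq_sqrt (by positivity), sq]
  rw [gaussianDensity, hquad, hsq, neg_div, rpow_neg (by positivity), ← sqrt_eq_rpow,
    sqrt_sq (by positivity), mul_inv, mul_assoc, mul_left_comm]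

lemma integral_gaussianDensity_mul {B : Matrix ι ι ℝ} (hB : B.det ≠ 0) (g : (ι → ℝ) → ℝ) :
    ∫ x, gaussianDensity (Bᵀ * B) x * g x =
      (√(2 * π) ^ Fintype.card ι)⁻¹ * ∫ y, g (Bᵀ *ᵥ y) * exp (-(y ⬝ᵥ y) / 2) := by
  have h := integral_comp_mulVec (by rwa [det_transpose]) fun x =>
    gaussianDensity (Bᵀ * B) x * g x
  simp only [gaussianDensity_transpose_mul_self_mulVec hB, det_transpose, smul_eq_mul] at h
  rw [← mul_right_inj' (inv_ne_zero (abs_ne_zero.mpr hB)), ← h, ← integral_const_mul,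
    ← integral_const_mul]
  congr 1 with y
  ring

lemma integrable_gaussianDensity_mul_iff {B : Matrix ι ι ℝ} (hB : B.det ≠ 0)
    {g : (ι → ℝ) → ℝ} :
    Integrable (fun x => gaussianDensity (Bᵀ * B) x * g x) ↔
      Integrable fun y => g (Bᵀ *ᵥ y) * exp (-(y ⬝ᵥ y) / 2) := by
  rw [← integrable_comp_mulVec_iff (by rwa [det_transpose])]
  simp_rw [gaussianDensity_transpose_mul_self_mulVec hB]
  have hc : IsUnit (|B.det|⁻¹ * (√(2 * π) ^ Fintype.card ι)⁻¹) := by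
    have := abs_pos.mpr hB
    exact (by positivity : (0:ℝ) < _).ne'.isUnit
  rw [← integrable_const_mul_iff hc fun y => g (Bᵀ *ᵥ y) * exp (-(y ⬝ᵥ y) / 2)]
  exact Iff.of_eq (by congr 1 with y; ring)

variable {S S' : Matrix ι ι ℝ}

lemma integrable_gaussianDensity (hS : S.PosDef) : Integrable (gaussianDensity S) := by
  obtain ⟨B, hB, rfl⟩ := hS.exists_transpose_mul_self_eq
  simpa using (integrable_gaussianDensity_mul_iff hB (g := fun _ => 1)).mpr
    (by simpa using integrable_exp_neg_dotProduct_self_div_two)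

lemma integral_gaussianDensity (hS : S.PosDef) : ∫ x, gaussianDensity S x = 1 := by
  obtain ⟨B, hB, rfl⟩ := hS.exists_transpose_mul_self_eq
  have h := integral_gaussianDensity_mul hB fun _ => 1
  simp only [mul_one, one_mul, integral_exp_neg_dotProduct_self_div_two] at h
  rwa [inv_mul_cancel₀ (by positivity)] at h

lemma integrable_gaussianDensity_mul_dotProduct_mulVec (hS : S.PosDef) (A : Matrix ι ι ℝ) :
    Integrable fun x => gaussianDensity S x * (x ⬝ᵥ A *ᵥ x) := by
  obtain ⟨B, hB, rfl⟩ := hS.exists_transpose_mul_self_eq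
  simpa only [integrable_gaussianDensity_mul_iff hB, transpose_mulVec_dotProduct_mulVec] using
    integrable_dotProduct_mulVec_mul_exp_neg_dotProduct_self_div_two (B * A * Bᵀ)

lemma integral_gaussianDensity_mul_dotProduct_mulVec (hS : S.PosDef) (A : Matrix ι ι ℝ) :
    ∫ x, gaussianDensity S x * (x ⬝ᵥ A *ᵥ x) = (A * S).trace := by
  obtain ⟨B, hB, rfl⟩ := hS.exists_transpose_mul_self_eq
  simp only [integral_gaussianDensity_mul hB, transpose_mulVec_dotProduct_mulVec,
    integral_dotProduct_mulVec_mul_exp_neg_dotProduct_self_div_two]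
  rw [mul_comm (trace _), inv_mul_cancel_left₀ (by positivity), trace_mul_cycle,
    trace_mul_comm A]

lemma log_gaussianDensity_div (hS : S.PosDef) (hS' : S'.PosDef) (x : ι → ℝ) :
    log (gaussianDensity S' x / gaussianDensity S x) =
      log (S.det / S'.det) / 2 + x ⬝ᵥ ((2⁻¹ : ℝ) • (S⁻¹ - S'⁻¹)) *ᵥ x := by
  have h2π : 0 < (2 * π) ^ Fintype.card ι := by positivity
  have hd := hS.det_pos
  have hd' := hS'.det_pos
  rw [gaussianDensity, gaussianDensity, mul_div_mul_comm, ← exp_sub,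
    log_mul (by positivity) (by positivity), log_exp, log_div (by positivity) (by positivity),
    log_rpow (by positivity), log_rpow (by positivity), log_mul h2π.ne' hd.ne',
    log_mul h2π.ne' hd'.ne', log_div hd.ne' hd'.ne', smul_mulVec, sub_mulVec, dotProduct_smul,
    dotProduct_sub, smul_eq_mul]
  ring

theorem integral_gaussianDensity_mul_log_div (hS : S.PosDef) (hS' : S'.PosDef) :
    ∫ x, gaussianDensity S' x * log (gaussianDensity S' x / gaussianDensity S x) =
      ((S⁻¹ * S').trace - Fintype.card ι + log (S.det / S'.det)) / 2 := by
  simp only [log_gaussianDensity_div hS hS', mul_add]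
  rw [integral_add ((integrable_gaussianDensity hS').mul_const _)
      (integrable_gaussianDensity_mul_dotProduct_mulVec hS' _), integral_mul_const,
    integral_gaussianDensity hS', integral_gaussianDensity_mul_dotProduct_mulVec hS',
    smul_mul, Matrix.sub_mul, nonsing_inv_mul _ hS'.det_pos.ne'.isUnit, trace_smul, trace_sub,
    trace_one, smul_eq_mul]
  ring

end GaussianDensity

section SpikedCovariance

variable [DecidableEq ι]

noncomputable def spikedCov (r t : ℝ) (v : ι → ℝ) : Matrix ι ι ℝ := r • 1 + t • vecMulVec v v

variable {r t : ℝ} {u v : ι → ℝ}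

lemma posDef_spikedCov (hr : 0 < r) (ht : 0 ≤ t) (v : ι → ℝ) : (spikedCov r t v).PosDef := by
  unfold spikedCov
  simpa using (PosDef.one.smul hr).add_posSemidef ((posSemidef_vecMulVec_self_star v).smul ht)

lemma det_spikedCov (hr : r ≠ 0) (t : ℝ) (v : ι → ℝ) :
    (spikedCov r t v).det = r ^ Fintype.card ι * (1 + t / r * (v ⬝ᵥ v)) := by
  have : spikedCov r t v = r • (1 + replicateCol Unit ((t / r) • v) * replicateRow Unit v) := by
    rw [spikedCov, ← vecMulVec_eq, smul_add, smul_vecMulVec, smul_smul, mul_div_cancel₀ _ hr]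
  rw [this, det_smul, det_one_add_replicateCol_mul_replicateRow, dotProduct_smul, smul_eq_mul]

lemma inv_spikedCov (hv : v ⬝ᵥ v = 1) (hr : r ≠ 0) (hrt : r + t ≠ 0) :
    (spikedCov r t v)⁻¹ = r⁻¹ • 1 - (t / (r * (r + t))) • vecMulVec v v := by
  refine inv_eq_left_inv ?_
  simp only [spikedCov, Matrix.sub_mul, Matrix.mul_add, Matrix.smul_mul, Matrix.mul_smul,
    Matrix.one_mul, Matrix.mul_one, vecMulVec_mul_vecMulVec, hv, one_smul]
  have hcoef : t * r⁻¹ - (r + t) * (t / (r * (r + t))) = 0 := by field_simp; ring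
  calc _ = (r * r⁻¹) • (1 : Matrix ι ι ℝ) +
        (t * r⁻¹ - (r + t) * (t / (r * (r + t)))) • vecMulVec v v := by module
    _ = 1 := by rw [hcoef, mul_inv_cancel₀ hr, one_smul, zero_smul, add_zero]

lemma trace_inv_spikedCov_mul_spikedCov (hu : u ⬝ᵥ u = 1) (hv : v ⬝ᵥ v = 1) (hr : r ≠ 0)
    (hrt : r + t ≠ 0) :
    ((spikedCov r t u)⁻¹ * spikedCov r t v).trace =
      Fintype.card ι + t ^ 2 / (r * (r + t)) * (1 - (u ⬝ᵥ v) ^ 2) := by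
  rw [inv_spikedCov hu hr hrt, spikedCov]
  simp only [Matrix.sub_mul, Matrix.mul_add, Matrix.smul_mul, Matrix.mul_smul, Matrix.one_mul,
    Matrix.mul_one, vecMulVec_mul_vecMulVec, trace_sub, trace_add, trace_smul, trace_one,
    trace_vecMulVec, dotProduct_smul, hu, hv, smul_eq_mul]
  field_simp
  ring

end SpikedCovariance

/-- KL divergence between the spiked Gaussians `N_p(0, σ²I + θvvᵀ)` and `N_p(0, σ²I + θuuᵀ)`
equals `θ²/(2σ²(σ²+θ)) (1 - (uᵀv)²)`, expressed via Lebesgue densities. -/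
theorem stmt_6 (p : ℕ) (σ θ : ℝ) (hσ : 0 < σ) (hθ : 0 < θ)
    (u v : Fin p → ℝ) (hu : ∑ i, u i ^ 2 = 1) (hv : ∑ i, v i ^ 2 = 1)
    (Su Sv : Matrix (Fin p) (Fin p) ℝ)
    (hSu : Su = σ ^ 2 • (1 : Matrix (Fin p) (Fin p) ℝ) + θ • Matrix.of (fun i j => u i * u j))
    (hSv : Sv = σ ^ 2 • (1 : Matrix (Fin p) (Fin p) ℝ) + θ • Matrix.of (fun i j => v i * v j))
    (fu fv : (Fin p → ℝ) → ℝ)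
    (hfu : fu = fun x => ((2 * Real.pi) ^ p * Su.det) ^ (-(1:ℝ)/2) *
      Real.exp (-(∑ i, x i * (Su⁻¹).mulVec x i) / 2))
    (hfv : fv = fun x => ((2 * Real.pi) ^ p * Sv.det) ^ (-(1:ℝ)/2) *
      Real.exp (-(∑ i, x i * (Sv⁻¹).mulVec x i) / 2)) :
    ∫ x : Fin p → ℝ, fv x * Real.log (fv x / fu x)
      = θ ^ 2 / (2 * σ ^ 2 * (σ ^ 2 + θ)) * (1 - (∑ i, u i * v i) ^ 2) := by
  have hσ2 : 0 < σ ^ 2 := by positivity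
  have hu' : u ⬝ᵥ u = 1 := by simpa [dotProduct, sq] using hu
  have hv' : v ⬝ᵥ v = 1 := by simpa [dotProduct, sq] using hv
  replace hSu : Su = spikedCov (σ ^ 2) θ u := hSu
  replace hSv : Sv = spikedCov (σ ^ 2) θ v := hSv
  replace hfu : fu = gaussianDensity Su := by
    ext x; rw [hfu, gaussianDensity, Fintype.card_fin]; rfl
  replace hfv : fv = gaussianDensity Sv := by
    ext x; rw [hfv, gaussianDensity, Fintype.card_fin]; rfl
  have huv : ∑ i, u i * v i = u ⬝ᵥ v := rfl
  rw [hfu, hfv, integral_gaussianDensity_mul_log_div (hSu ▸ posDef_spikedCov hσ2 hθ.le u)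
    (hSv ▸ posDef_spikedCov hσ2 hθ.le v), hSu, hSv, det_spikedCov hσ2.ne', det_spikedCov hσ2.ne',
    hu', hv', div_self (by positivity), log_one,
    trace_inv_spikedCov_mul_spikedCov hu' hv' hσ2.ne' (by positivity), Fintype.card_fin, huv]
  field_simp
  ring
end

section
/- Let v ∈ ℝ^p be a unit vector with at most k nonzero entries, supported on S, and let v̂ ∈ ℝ^p be any unit vector. Let Ŝ be any set of k indices containing the k largest coordinates of v̂ in absolute value. Then 1 - (v̂ᵀv)² ≥ (1/2)·Σ_{j ∈ S \ Ŝ} vⱼ². -/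
/-!
Split the support `S` of `v` into `A = S \ Ŝ` and `B = S ∩ Ŝ`. Since `|S| ≤ k = |Ŝ|`, the set
`Ŝ \ S` has at least as many elements as `A`, each carrying at least as much `v̂`-mass as any
element of `A`; hence `2‖v̂_A‖² + ‖v̂_B‖² ≤ ‖v̂‖² = 1`. Cauchy–Schwarz on `A` and `B` separately,
combined with weights `2` and `1/2` on `A`, gives
`(v̂ᵀv)² ≤ (2‖v̂_A‖² + ‖v̂_B‖²)(‖v_A‖²/2 + ‖v_B‖²) ≤ 1 - ‖v_A‖²/2`.
-/

open Finset

theorem Finset.sum_sdiff_le_sum_sdiff_of_card_le {ι M : Type*} [DecidableEq ι] [AddCommMonoid M]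
    [LinearOrder M] [IsOrderedAddMonoid M] {s t : Finset ι} {f : ι → M} (hf : 0 ≤ f)
    (hst : #s ≤ #t) (htop : ∀ i ∈ t, ∀ j ∉ t, f j ≤ f i) :
    ∑ j ∈ s \ t, f j ≤ ∑ i ∈ t \ s, f i := by
  have hcard : #(s \ t) ≤ #(t \ s) := card_sdiff_le_card_sdiff_iff.2 hst
  rcases (t \ s).eq_empty_or_nonempty with hempty | hne
  · rw [hempty, card_empty, Nat.le_zero, card_eq_zero] at hcard
    simp [hempty, hcard]
  obtain ⟨i₀, hi₀, hmin⟩ := (t \ s).exists_min_image f hne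
  calc ∑ j ∈ s \ t, f j
      ≤ #(s \ t) • f i₀ :=
        sum_le_card_nsmul _ _ _ fun j hj => htop i₀ (mem_sdiff.1 hi₀).1 j (mem_sdiff.1 hj).2
    _ ≤ #(t \ s) • f i₀ := nsmul_le_nsmul_left (hf i₀) hcard
    _ ≤ ∑ i ∈ t \ s, f i := card_nsmul_le_sum _ _ _ hmin

theorem Finset.sum_sdiff_add_sum_le_sum_univ {ι M : Type*} [Fintype ι] [DecidableEq ι]
    [AddCommMonoid M] [PartialOrder M] [IsOrderedAddMonoid M] {f : ι → M} (hf : 0 ≤ f)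
    (s t : Finset ι) : ∑ j ∈ s \ t, f j + ∑ j ∈ t, f j ≤ ∑ j, f j := by
  rw [← sum_union sdiff_disjoint]
  exact sum_le_univ_sum_of_nonneg hf

theorem sq_add_le_mul_of_sq_le_mul {x y a b c d : ℝ} (hx : x ^ 2 ≤ a * b) (hy : y ^ 2 ≤ c * d)
    (ha : 0 ≤ a) (hb : 0 ≤ b) (hc : 0 ≤ c) (hd : 0 ≤ d) :
    (x + y) ^ 2 ≤ (a + c) * (b + d) := by
  have hxy : 2 * (x * y) ≤ a * d + b * c := by
    have hsq : (2 * (x * y)) ^ 2 ≤ (a * d + b * c) ^ 2 := by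
      nlinarith [sq_nonneg (a * d - b * c), mul_le_mul hx hy (sq_nonneg y) (by positivity)]
    exact (abs_le_of_sq_le_sq' hsq (by positivity)).2
  nlinarith

/-- Support recovery lemma: if `Ŝ` contains the `k` largest coordinates of `v̂` in absolute
value, then `1 - (v̂ᵀv)² ≥ (1/2) Σ_{j ∈ S \ Ŝ} vⱼ²`. -/
theorem stmt_8 (p k : ℕ) (v vhat : Fin p → ℝ)
    (hv : ∑ i, v i ^ 2 = 1) (hvhat : ∑ i, vhat i ^ 2 = 1)
    (hv0 : (Finset.univ.filter (fun j => v j ≠ 0)).card ≤ k)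
    (Shat : Finset (Fin p)) (hcard : Shat.card = k)
    (htop : ∀ i ∈ Shat, ∀ j ∉ Shat, |vhat j| ≤ |vhat i|) :
    (1 / 2) * ∑ j ∈ (Finset.univ.filter (fun j => v j ≠ 0)) \ Shat, v j ^ 2
      ≤ 1 - (∑ i, vhat i * v i) ^ 2 := by
  set S := univ.filter (fun j => v j ≠ 0)
  have hvS : ∑ j ∈ S, v j ^ 2 = 1 :=
    hv ▸ sum_filter_of_ne fun _ _ h => ne_zero_pow two_ne_zero h
  have hinner : ∑ j ∈ S, vhat j * v j = ∑ i, vhat i * v i :=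
    sum_filter_of_ne fun _ _ h => right_ne_zero_of_mul h
  have hmass : ∑ j ∈ S ∩ Shat, vhat j ^ 2 + 2 * ∑ j ∈ S \ Shat, vhat j ^ 2 ≤ 1 := by
    have hexch : ∑ j ∈ S \ Shat, vhat j ^ 2 ≤ ∑ j ∈ Shat \ S, vhat j ^ 2 :=
      sum_sdiff_le_sum_sdiff_of_card_le (fun _ => sq_nonneg _) (hcard ▸ hv0)
        fun i hi j hj => sq_le_sq.2 (htop i hi j hj)
    have hsub := sum_sdiff_add_sum_le_sum_univ (f := fun j => vhat j ^ 2)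
      (fun _ => sq_nonneg _) S Shat
    rw [← sum_inter_add_sum_sdiff Shat S, inter_comm] at hsub
    linarith
  have hCS := sq_add_le_mul_of_sq_le_mul (sum_mul_sq_le_sq_mul_sq (S ∩ Shat) vhat v)
    (y := ∑ j ∈ S \ Shat, vhat j * v j) (c := 2 * ∑ j ∈ S \ Shat, vhat j ^ 2)
    (d := (∑ j ∈ S \ Shat, v j ^ 2) / 2)
    (by linarith [sum_mul_sq_le_sq_mul_sq (S \ Shat) vhat v])
    (by positivity) (by positivity) (by positivity) (by positivity)
  rw [sum_inter_add_sum_sdiff, hinner] at hCS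
  have hsplit := sum_inter_add_sum_sdiff S Shat fun j => v j ^ 2
  linarith [hCS.trans (mul_le_of_le_one_left (by positivity) hmass)]
end

section
/- Let Σ, Σ̂ ∈ ℝ^{p×p} be symmetric with Σ positive semidefinite, eigengap θ := λ₁(Σ) - λ₂(Σ) > 0 and unit leading eigenvector v with ‖v‖₀ ≤ k supported on S. Let λ > 0, ε ≥ 0, suppose ‖Σ̂ - Σ‖_∞ ≤ λ, and let M̂ be a symmetric positive semidefinite matrix with tr(M̂) = 1 satisfying tr(Σ̂M̂) - λ‖M̂‖₁ ≥ max_{M ∈ M₁}(tr(Σ̂M) - λ‖M‖₁) - ε, where M₁ is the set of p×p PSD matrices with unit trace. Then ‖vvᵀ - M̂‖₂ ≤ 4λk/θ + √(2ε/θ). -/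
/-!
Write `P = vvᵀ` and `Δ = P - M̂`. Since `Σ ≼ (λ₁ - θ) I + θ P` on quadratic forms, for a unit-trace
PSD `M̂` one gets `tr(ΣΔ) ≥ θ (1 - vᵀM̂v) ≥ (θ/2) ‖Δ‖₂²`. On the other hand `tr(ΣΔ)` differs from
`tr(Σ̂Δ)` by at most `λ‖Δ‖₁`, and ε-optimality of `M̂` against the feasible point `P` bounds `tr(Σ̂Δ)`
by `λ(‖P‖₁ - ‖M̂‖₁) + ε`. As `P` vanishes off `S × S`, `‖P‖₁ - ‖M̂‖₁ + ‖Δ‖₁ ≤ 2‖Δ_{SS}‖₁ ≤ 2k‖Δ‖₂`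
by Cauchy–Schwarz. Hence `(θ/2) ‖Δ‖₂² ≤ 2λk ‖Δ‖₂ + ε`, a quadratic inequality in `‖Δ‖₂`.
-/

open Matrix Finset
open scoped Classical

theorem le_add_sqrt_of_sq_le_mul_add {d A b : ℝ} (hA : 0 ≤ A) (hb : 0 ≤ b)
    (h : d ^ 2 ≤ A * d + b) : d ≤ A + √b := by
  have hsq : √b ^ 2 = b := Real.sq_sqrt hb
  nlinarith [mul_nonneg hA (Real.sqrt_nonneg b), Real.sqrt_nonneg b]

theorem sum_abs_sub_sum_abs_add_sum_abs_sub_le {ι : Type*} [Fintype ι] {f g : ι → ℝ}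
    {s : Finset ι} (hf : ∀ i ∉ s, f i = 0) :
    ∑ i, |f i| - ∑ i, |g i| + ∑ i, |f i - g i| ≤ 2 * ∑ i ∈ s, |f i - g i| := by
  rw [← sum_sub_distrib, ← sum_add_distrib, mul_sum, ← univ_inter s, ← sum_ite_mem]
  refine sum_le_sum fun i _ => ?_
  split_ifs with hi
  · linarith [abs_sub_abs_le_abs_sub (f i) (g i)]
  · simp [hf i hi]

theorem sum_abs_le_sqrt_card_mul_sqrt_sum_sq {ι : Type*} [Fintype ι] (s : Finset ι)
    (h : ι → ℝ) : ∑ i ∈ s, |h i| ≤ √(#s : ℝ) * √(∑ i, h i ^ 2) := by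
  rw [← Real.sqrt_mul (Nat.cast_nonneg _)]
  refine Real.le_sqrt_of_sq_le ?_
  calc (∑ i ∈ s, |h i|) ^ 2 ≤ #s * ∑ i ∈ s, |h i| ^ 2 := sq_sum_le_card_mul_sum_sq
    _ ≤ #s * ∑ i, h i ^ 2 := by
      gcongr
      simpa only [sq_abs] using sum_le_sum_of_subset_of_nonneg (subset_univ s)
        (fun i _ _ => sq_nonneg (h i))

namespace Matrix

variable {n : Type*}

theorem PosSemidef.sq_apply_le {M : Matrix n n ℝ} (hM : M.PosSemidef) (i j : n) :
    M i j ^ 2 ≤ M i i * M j j := by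
  have h := (hM.submatrix ![i, j]).det_nonneg
  have hsymm : M j i = M i j := by simpa using congrFun (congrFun hM.1 i) j
  rw [det_fin_two] at h
  simp only [submatrix_apply, cons_val_zero, cons_val_one, hsymm] at h
  nlinarith

variable [Fintype n]

theorem PosSemidef.sum_sq_apply_le_trace_sq {M : Matrix n n ℝ} (hM : M.PosSemidef) :
    ∑ i, ∑ j, M i j ^ 2 ≤ M.trace ^ 2 :=
  calc ∑ i, ∑ j, M i j ^ 2 ≤ ∑ i, ∑ j, M i i * M j j :=
        sum_le_sum fun i _ => sum_le_sum fun j _ => hM.sq_apply_le i j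
    _ = M.trace ^ 2 := by rw [← sum_mul_sum, sq]; rfl

theorem trace_mul_le_of_abs_apply_le {A B : Matrix n n ℝ} {lam : ℝ}
    (h : ∀ i j, |A i j| ≤ lam) : (A * B).trace ≤ lam * ∑ i, ∑ j, |B i j| :=
  calc (A * B).trace = ∑ i, ∑ j, A i j * B j i := by simp [trace, mul_apply]
    _ ≤ ∑ i, ∑ j, lam * |B j i| := sum_le_sum fun i _ => sum_le_sum fun j _ =>
        (le_abs_self _).trans <| by
          rw [abs_mul]; exact mul_le_mul_of_nonneg_right (h i j) (abs_nonneg _)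
    _ = lam * ∑ i, ∑ j, |B i j| := by rw [sum_comm]; simp only [mul_sum]

theorem trace_mul_vecMulVec_self (S : Matrix n n ℝ) (u : n → ℝ) :
    (S * vecMulVec u u).trace = u ⬝ᵥ S *ᵥ u := by
  rw [mul_vecMulVec, trace_vecMulVec, dotProduct_comm]

theorem sum_abs_vecMulVec_sub_le {v : n → ℝ} {k : ℕ}
    (hv0 : (univ.filter (fun j => v j ≠ 0)).card ≤ k) (M : Matrix n n ℝ) :
    ∑ i, ∑ j, |v i * v j| - ∑ i, ∑ j, |M i j| + ∑ i, ∑ j, |v i * v j - M i j|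
      ≤ 2 * k * √(∑ i, ∑ j, (v i * v j - M i j) ^ 2) := by
  set T := univ.filter (fun j => v j ≠ 0)
  have hsupp : ∀ x ∉ T ×ˢ T, v x.1 * v x.2 = 0 := by
    intro x hx
    simp only [mem_product, T, mem_filter, mem_univ, true_and, not_and_or, not_not] at hx
    rcases hx with h | h <;> simp [h]
  have hcone := sum_abs_sub_sum_abs_add_sum_abs_sub_le (g := fun x : n × n => M x.1 x.2) hsupp
  have hcs := sum_abs_le_sqrt_card_mul_sqrt_sum_sq (T ×ˢ T)
    (fun x : n × n => v x.1 * v x.2 - M x.1 x.2)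
  have hcard : √(#(T ×ˢ T) : ℝ) ≤ k := by
    rw [card_product, Nat.cast_mul, Real.sqrt_mul_self (Nat.cast_nonneg _)]
    exact_mod_cast hv0
  simp only [Fintype.sum_prod_type] at hcone hcs
  calc _ ≤ 2 * ∑ x ∈ T ×ˢ T, |v x.1 * v x.2 - M x.1 x.2| := hcone
    _ ≤ 2 * k * √(∑ i, ∑ j, (v i * v j - M i j) ^ 2) := by
      rw [mul_assoc]
      gcongr
      exact hcs.trans (by gcongr)

theorem sum_sq_vecMulVec_sub_le {v : n → ℝ} (hv : v ⬝ᵥ v = 1) {M : Matrix n n ℝ}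
    (hM : M.PosSemidef) (hMtr : M.trace = 1) :
    ∑ i, ∑ j, (v i * v j - M i j) ^ 2 ≤ 2 * (1 - v ⬝ᵥ M *ᵥ v) := by
  have hvv : ∑ i, ∑ j, (v i * v j) ^ 2 = 1 := by
    have hsq : ∑ i, v i ^ 2 = 1 := by simpa only [dotProduct, ← sq] using hv
    simp only [mul_pow, ← mul_sum, ← sum_mul, hsq, one_mul]
  have hvMv : ∑ i, ∑ j, v i * v j * M i j = v ⬝ᵥ M *ᵥ v := by
    simp only [dotProduct, mulVec, mul_sum]
    exact sum_congr rfl fun i _ => sum_congr rfl fun j _ => by ring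
  have hMM := hM.sum_sq_apply_le_trace_sq
  rw [hMtr] at hMM
  calc ∑ i, ∑ j, (v i * v j - M i j) ^ 2
      = ∑ i, ∑ j, (v i * v j) ^ 2 - 2 * ∑ i, ∑ j, v i * v j * M i j
          + ∑ i, ∑ j, M i j ^ 2 := by
        simp only [sub_sq, sum_add_distrib, sum_sub_distrib, mul_sum, mul_assoc]
    _ ≤ 2 * (1 - v ⬝ᵥ M *ᵥ v) := by rw [hvv, hvMv]; linarith

section Eigengap

variable {S : Matrix n n ℝ} {v : n → ℝ} {lam1 theta : ℝ}

theorem dotProduct_mulVec_le_of_orthogonal {mu : ℝ}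
    (hgap : ∀ w : n → ℝ, w ⬝ᵥ w = 1 → w ⬝ᵥ v = 0 → w ⬝ᵥ S *ᵥ w ≤ mu)
    {y : n → ℝ} (hy : y ⬝ᵥ v = 0) : y ⬝ᵥ S *ᵥ y ≤ mu * (y ⬝ᵥ y) := by
  rcases eq_or_ne y 0 with rfl | hy0
  · simp
  have hpos : 0 < y ⬝ᵥ y := lt_of_le_of_ne (dotProduct_self_star_nonneg y)
    (Ne.symm (dotProduct_self_eq_zero.not.mpr hy0))
  set r := √(y ⬝ᵥ y)
  have hr : r ^ 2 = y ⬝ᵥ y := Real.sq_sqrt hpos.le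
  have hr0 : r ≠ 0 := (Real.sqrt_pos.mpr hpos).ne'
  have h := hgap (r⁻¹ • y) (by
    simp only [dotProduct_smul, smul_dotProduct, ← hr, smul_eq_mul]; field_simp)
    (by simp [smul_dotProduct, hy])
  simp only [mulVec_smul, smul_dotProduct, dotProduct_smul, smul_eq_mul] at h
  rw [← hr]
  rwa [← mul_assoc, ← sq, inv_pow, inv_mul_le_iff₀ (by positivity), mul_comm] at h

variable (hS : S.IsSymm) (hv : v ⬝ᵥ v = 1) (heig : S *ᵥ v = lam1 • v)
  (hgap : ∀ w : n → ℝ, w ⬝ᵥ w = 1 → w ⬝ᵥ v = 0 → w ⬝ᵥ S *ᵥ w ≤ lam1 - theta)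
include hS hv heig hgap

theorem dotProduct_mulVec_le_of_eigengap (x : n → ℝ) :
    x ⬝ᵥ S *ᵥ x ≤ (lam1 - theta) * (x ⬝ᵥ x) + theta * (v ⬝ᵥ x) ^ 2 := by
  set c := v ⬝ᵥ x
  set y := x - c • v
  have hyv : y ⬝ᵥ v = 0 := by
    simp [y, sub_dotProduct, smul_dotProduct, hv, dotProduct_comm x v, c]
  have hvSy : v ⬝ᵥ S *ᵥ y = 0 := by
    rw [dotProduct_mulVec, ← mulVec_transpose, hS.eq, heig, smul_dotProduct, dotProduct_comm,
      hyv, smul_zero]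
  have hx : x = c • v + y := by simp [y]
  have hyy : y ⬝ᵥ y = x ⬝ᵥ x - c ^ 2 := by
    rw [hx]
    simp only [dotProduct_add, dotProduct_smul, add_dotProduct, smul_dotProduct, hv, smul_eq_mul,
      mul_one, hyv, add_zero, dotProduct_comm v y, mul_zero, zero_add]
    ring
  have hquad : x ⬝ᵥ S *ᵥ x = lam1 * c ^ 2 + y ⬝ᵥ S *ᵥ y := by
    rw [hx]
    simp only [mulVec_add, mulVec_smul, heig, dotProduct_add, dotProduct_smul, add_dotProduct,
      smul_dotProduct, hv, smul_eq_mul, mul_one, hyv, add_zero, hvSy, mul_zero, zero_add]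
    ring
  have hy := dotProduct_mulVec_le_of_orthogonal hgap hyv
  rw [hyy] at hy
  rw [hquad]
  linarith

theorem trace_mul_le_of_eigengap {M : Matrix n n ℝ} (hM : M.PosSemidef) :
    (S * M).trace ≤ (lam1 - theta) * M.trace + theta * (v ⬝ᵥ M *ᵥ v) := by
  obtain ⟨m, u, rfl⟩ := posSemidef_iff_eq_sum_vecMulVec.mp hM
  simp only [star_trivial, mul_sum, trace_sum, trace_mul_vecMulVec_self, trace_vecMulVec,
    sum_mulVec, dotProduct_sum, vecMulVec_mulVec, op_smul_eq_smul, dotProduct_smul, smul_eq_mul,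
    ← sum_add_distrib]
  refine sum_le_sum fun i _ => ?_
  rw [dotProduct_comm (u i) v, ← sq]
  exact dotProduct_mulVec_le_of_eigengap hS hv heig hgap (u i)

theorem sum_sq_vecMulVec_sub_le_trace_mul_of_eigengap (htheta : 0 ≤ theta) {M : Matrix n n ℝ}
    (hM : M.PosSemidef) (hMtr : M.trace = 1) :
    theta / 2 * ∑ i, ∑ j, (v i * v j - M i j) ^ 2 ≤ (S * (vecMulVec v v - M)).trace := by
  have hSM := trace_mul_le_of_eigengap hS hv heig hgap hM
  have hSP : (S * vecMulVec v v).trace = lam1 := by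
    rw [trace_mul_vecMulVec_self, heig, dotProduct_smul, hv, smul_eq_mul, mul_one]
  have hdist := mul_le_mul_of_nonneg_left (sum_sq_vecMulVec_sub_le hv hM hMtr) htheta
  rw [Matrix.mul_sub, trace_sub, hSP]
  rw [hMtr] at hSM
  linarith

end Eigengap

end Matrix

theorem stmt_10_general (p k : ℕ) (S Shat Mhat : Matrix (Fin p) (Fin p) ℝ)
    (hSsymm : S.IsSymm)
    (lam1 theta lam eps : ℝ) (htheta : 0 < theta) (hlam : 0 < lam) (heps : 0 ≤ eps)
    (v : Fin p → ℝ) (hv : ∑ i, v i ^ 2 = 1)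
    (hv0 : (Finset.univ.filter (fun j => v j ≠ 0)).card ≤ k)
    (heig : S.mulVec v = lam1 • v)
    (hgap : ∀ w : Fin p → ℝ, (∑ i, w i ^ 2 = 1) → (∑ i, w i * v i = 0) →
      ∑ i, w i * S.mulVec w i ≤ lam1 - theta)
    (hclose : ∀ i j, |Shat i j - S i j| ≤ lam)
    (hMhat : Mhat.PosSemidef) (hMtr : Mhat.trace = 1)
    (hopt : ∀ M : Matrix (Fin p) (Fin p) ℝ, M.PosSemidef → M.trace = 1 →
      (Shat * M).trace - lam * (∑ i, ∑ j, |M i j|) ≤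
        (Shat * Mhat).trace - lam * (∑ i, ∑ j, |Mhat i j|) + eps) :
    Real.sqrt (∑ i, ∑ j, (v i * v j - Mhat i j) ^ 2)
      ≤ 4 * lam * k / theta + Real.sqrt (2 * eps / theta) := by
  have hunit : ∀ w : Fin p → ℝ, ∑ i, w i ^ 2 = w ⬝ᵥ w := fun w => by simp only [dotProduct, sq]
  have hv' : v ⬝ᵥ v = 1 := hunit v ▸ hv
  set D := ∑ i, ∑ j, (v i * v j - Mhat i j) ^ 2
  have hcurv : theta / 2 * D ≤ (S * (vecMulVec v v - Mhat)).trace :=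
    sum_sq_vecMulVec_sub_le_trace_mul_of_eigengap hSsymm hv' heig
      (fun w hw => hgap w (hunit w ▸ hw)) htheta.le hMhat hMtr
  have hpert : ((S - Shat) * (vecMulVec v v - Mhat)).trace
      ≤ lam * ∑ i, ∑ j, |v i * v j - Mhat i j| := by
    simpa only [Matrix.sub_apply, vecMulVec_apply] using trace_mul_le_of_abs_apply_le
      (A := S - Shat) (B := vecMulVec v v - Mhat)
      fun i j => (abs_sub_comm (S i j) (Shat i j)).trans_le (hclose i j)
  have hoptP := hopt (vecMulVec v v) (posSemidef_vecMulVec_self_star v) (by simpa using hv')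
  simp only [vecMulVec_apply] at hoptP
  have hsparse := mul_le_mul_of_nonneg_left (sum_abs_vecMulVec_sub_le hv0 Mhat) hlam.le
  have hquad : √D ^ 2 ≤ 4 * lam * k / theta * √D + 2 * eps / theta := by
    rw [Real.sq_sqrt (by positivity), div_mul_eq_mul_div, ← add_div, le_div_iff₀ htheta]
    simp only [Matrix.sub_mul, Matrix.mul_sub, trace_sub] at hcurv hpert
    linarith
  exact le_add_sqrt_of_sq_le_mul_add (by positivity) (by positivity) hquad

/-- Deterministic SDP bound: if `‖Σ̂ - Σ‖_∞ ≤ λ` and `M̂` is an ε-maximiser of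
`tr(Σ̂M) - λ‖M‖₁` over PSD unit-trace matrices, then
`‖vvᵀ - M̂‖₂ ≤ 4λk/θ + √(2ε/θ)`. -/
theorem stmt_10 (p k : ℕ) (S Shat Mhat : Matrix (Fin p) (Fin p) ℝ)
    (hSsymm : S.IsSymm) (hSpsd : S.PosSemidef) (hShatsymm : Shat.IsSymm)
    (lam1 theta lam eps : ℝ) (htheta : 0 < theta) (hlam : 0 < lam) (heps : 0 ≤ eps)
    (v : Fin p → ℝ) (hv : ∑ i, v i ^ 2 = 1)
    (hv0 : (Finset.univ.filter (fun j => v j ≠ 0)).card ≤ k)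
    (heig : S.mulVec v = lam1 • v)
    (hgap : ∀ w : Fin p → ℝ, (∑ i, w i ^ 2 = 1) → (∑ i, w i * v i = 0) →
      ∑ i, w i * S.mulVec w i ≤ lam1 - theta)
    (hclose : ∀ i j, |Shat i j - S i j| ≤ lam)
    (hMhat : Mhat.PosSemidef) (hMtr : Mhat.trace = 1)
    (hopt : ∀ M : Matrix (Fin p) (Fin p) ℝ, M.PosSemidef → M.trace = 1 →
      (Shat * M).trace - lam * (∑ i, ∑ j, |M i j|) ≤
        (Shat * Mhat).trace - lam * (∑ i, ∑ j, |Mhat i j|) + eps) :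
    Real.sqrt (∑ i, ∑ j, (v i * v j - Mhat i j) ^ 2)
      ≤ 4 * lam * k / theta + Real.sqrt (2 * eps / theta) :=
  stmt_10_general p k S Shat Mhat hSsymm lam1 theta lam eps htheta hlam heps v hv hv0 heig hgap
    hclose hMhat hMtr hopt
end

section
/- Let v̂ ∈ ℝ^p be a unit vector, let v̂₀ be a unit vector proportional to the vector obtained by setting all but the k largest (in absolute value) coordinates of v̂ to zero, and let v be any unit vector with ‖v‖₀ ≤ k. Then L(v̂₀, v) ≤ 2·L(v̂, v), where L(u,w) := (1 - (uᵀw)²)^{1/2}. -/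
/-!
`L(u, w) = √(1 - ⟪u, w⟫²)` is the sine of the angle between the lines `ℝ u` and `ℝ w`, and it
satisfies the triangle inequality: by Cauchy–Schwarz for the components of `x` and `z` orthogonal
to `y`, `|⟪x, z⟫ - ⟪x, y⟫ ⟪y, z⟫| ≤ L(x, y) L(y, z)`, which is the sine addition bound.
Since `⟪v̂₀, v̂⟫ = ‖w‖`, and the `k` largest coordinates of `v̂` carry at least as much mass as any
`k` coordinates, Cauchy–Schwarz on the support of `v` gives `⟪v̂, v⟫² ≤ ‖w‖² = ⟪v̂₀, v̂⟫²`, that is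
`L(v̂₀, v̂) ≤ L(v̂, v)`. The triangle inequality through `v̂` then yields `L(v̂₀, v) ≤ 2 L(v̂, v)`.
-/

open Finset
open scoped Classical
open scoped RealInnerProductSpace

-- With `a = cos θ` and `b = cos φ`, the hypothesis places `c` between `cos (θ + φ)` and
-- `cos (θ - φ)`.
theorem Real.sqrt_one_sub_sq_le_add {a b c : ℝ} (ha : a ^ 2 ≤ 1) (hb : b ^ 2 ≤ 1)
    (h : (c - a * b) ^ 2 ≤ (1 - a ^ 2) * (1 - b ^ 2)) :
    √(1 - c ^ 2) ≤ √(1 - a ^ 2) + √(1 - b ^ 2) := by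
  set α := √(1 - a ^ 2)
  set β := √(1 - b ^ 2)
  have hα0 : 0 ≤ α := Real.sqrt_nonneg _
  have hβ0 : 0 ≤ β := Real.sqrt_nonneg _
  have hc : |c - a * b| ≤ α * β := by
    rw [← Real.sqrt_mul (by linarith)]; exact Real.abs_le_sqrt h
  refine Real.sqrt_le_iff.mpr ⟨by positivity, ?_⟩
  rcases le_or_gt 1 (α + β) with h1 | h1
  · nlinarith [sq_nonneg c]
  set A := |a|
  set B := |b|
  have hA0 : 0 ≤ A := abs_nonneg a
  have hB0 : 0 ≤ B := abs_nonneg b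
  have hA : A ^ 2 + α ^ 2 = 1 := by rw [sq_abs, Real.sq_sqrt (by linarith)]; ring
  have hB : B ^ 2 + β ^ 2 = 1 := by rw [sq_abs, Real.sq_sqrt (by linarith)]; ring
  have hαβ : α * β ≤ A * B := by
    have : 1 - α ≤ A := by nlinarith
    have : 1 - β ≤ B := by nlinarith
    nlinarith
  have hcAB : (A * B - α * β) ^ 2 ≤ c ^ 2 := by
    have := abs_sub_abs_le_abs_sub (a * b) c
    rw [abs_mul, abs_sub_comm] at this
    rw [← sq_abs c]
    exact pow_le_pow_left₀ (by linarith) (by linarith) 2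
  have hsum : A * β + B * α ≤ α + β := by
    have : A ≤ 1 := by nlinarith
    have : B ≤ 1 := by nlinarith
    nlinarith
  calc 1 - c ^ 2 ≤ 1 - (A * B - α * β) ^ 2 := by linarith
    _ = (A * β + B * α) ^ 2 := by linear_combination -(B ^ 2 + β ^ 2) * hA - hB
    _ ≤ (α + β) ^ 2 := pow_le_pow_left₀ (by positivity) hsum 2

section InnerProductSpace

variable {F : Type*} [NormedAddCommGroup F] [InnerProductSpace ℝ F]

theorem sq_real_inner_le_one {x y : F} (hx : ‖x‖ = 1) (hy : ‖y‖ = 1) : ⟪x, y⟫ ^ 2 ≤ 1 :=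
  (sq_le_one_iff_abs_le_one _).mpr (by simpa [hx, hy] using abs_real_inner_le_norm x y)

theorem sqrt_one_sub_sq_real_inner_le_add {x y z : F} (hx : ‖x‖ = 1) (hy : ‖y‖ = 1)
    (hz : ‖z‖ = 1) :
    √(1 - ⟪x, z⟫ ^ 2) ≤ √(1 - ⟪x, y⟫ ^ 2) + √(1 - ⟪y, z⟫ ^ 2) := by
  set a := ⟪x, y⟫
  set b := ⟪y, z⟫
  have hxx : ⟪x, x⟫ = 1 := by rw [real_inner_self_eq_norm_sq, hx, one_pow]
  have hyy : ⟪y, y⟫ = 1 := by rw [real_inner_self_eq_norm_sq, hy, one_pow]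
  have hzz : ⟪z, z⟫ = 1 := by rw [real_inner_self_eq_norm_sq, hz, one_pow]
  have hyx : ⟪y, x⟫ = a := real_inner_comm x y
  have hzy : ⟪z, y⟫ = b := real_inner_comm y z
  have hcs := real_inner_mul_inner_self_le (x - a • y) (z - b • y)
  simp only [inner_sub_left, inner_sub_right, real_inner_smul_left, real_inner_smul_right,
    hxx, hyy, hzz, hyx, hzy] at hcs
  refine Real.sqrt_one_sub_sq_le_add (sq_real_inner_le_one hx hy) (sq_real_inner_le_one hy hz) ?_
  linear_combination hcs

theorem real_inner_inv_norm_smul_eq_norm {w u : F} (h : ⟪w, u⟫ = ‖w‖ ^ 2) :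
    ⟪‖w‖⁻¹ • w, u⟫ = ‖w‖ := by
  rw [real_inner_smul_left, h]
  rcases eq_or_ne ‖w‖ 0 with hw | hw
  · simp [hw]
  · field_simp

end InnerProductSpace

theorem Finset.sum_le_sum_of_card_le_of_forall_le {ι M : Type*} [AddCommMonoid M] [LinearOrder M]
    [IsOrderedAddMonoid M] {f : ι → M} {s t : Finset ι} (hcard : #t ≤ #s)
    (hf : ∀ i ∈ s, 0 ≤ f i) (htop : ∀ i ∈ s, ∀ j ∉ s, f j ≤ f i) :
    ∑ i ∈ t, f i ≤ ∑ i ∈ s, f i := by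
  rw [← sum_inter_add_sum_sdiff t s, ← sum_inter_add_sum_sdiff s t, inter_comm]
  refine add_le_add le_rfl ?_
  have hcard' : #(t \ s) ≤ #(s \ t) := card_sdiff_le_card_sdiff_iff.mpr hcard
  rcases (s \ t).eq_empty_or_nonempty with hst | hst
  · rw [hst, card_empty, Nat.le_zero, card_eq_zero] at hcard'
    rw [hst, hcard']
  obtain ⟨i₀, hi₀, hmin⟩ := exists_min_image (s \ t) f hst
  calc ∑ j ∈ t \ s, f j ≤ #(t \ s) • f i₀ :=
        sum_le_card_nsmul _ _ _ fun j hj => htop i₀ (mem_sdiff.1 hi₀).1 j (mem_sdiff.1 hj).2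
    _ ≤ #(s \ t) • f i₀ := nsmul_le_nsmul_left (hf i₀ (mem_sdiff.1 hi₀).1) hcard'
    _ ≤ ∑ i ∈ s \ t, f i := card_nsmul_le_sum _ _ _ hmin

theorem sq_sum_mul_le_sum_filter_sq_mul {ι : Type*} [Fintype ι] (x y : ι → ℝ) :
    (∑ i, x i * y i) ^ 2 ≤ (∑ i ∈ univ.filter (fun i => y i ≠ 0), x i ^ 2) * ∑ i, y i ^ 2 := by
  rw [← sum_filter_of_ne (p := fun i => y i ≠ 0) fun _ _ h => right_ne_zero_of_mul h,
    ← sum_filter_of_ne (p := fun i => y i ≠ 0) fun _ _ h => pow_ne_zero_iff two_ne_zero |>.mp h]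
  exact sum_mul_sq_le_sq_mul_sq _ x y

theorem sq_sum_mul_le_of_card_support_le {ι : Type*} [Fintype ι] {x y : ι → ℝ} {s : Finset ι}
    (hy : (univ.filter (fun i => y i ≠ 0)).card ≤ s.card)
    (htop : ∀ i ∈ s, ∀ j ∉ s, |x j| ≤ |x i|) :
    (∑ i, x i * y i) ^ 2 ≤ (∑ i ∈ s, x i ^ 2) * ∑ i, y i ^ 2 :=
  (sq_sum_mul_le_sum_filter_sq_mul x y).trans <| mul_le_mul_of_nonneg_right
    (sum_le_sum_of_card_le_of_forall_le hy (fun _ _ => sq_nonneg _)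
      fun i hi j hj => sq_le_sq.mpr (htop i hi j hj))
    (sum_nonneg fun _ _ => sq_nonneg _)

theorem EuclideanSpace.sum_mul_eq_inner_toLp {ι : Type*} [Fintype ι] (x y : ι → ℝ) :
    ∑ i, x i * y i = ⟪WithLp.toLp 2 x, WithLp.toLp 2 y⟫ := by
  simp [EuclideanSpace.inner_toLp_toLp, dotProduct, mul_comm]

theorem EuclideanSpace.norm_toLp_sq {ι : Type*} [Fintype ι] (x : ι → ℝ) :
    ‖WithLp.toLp 2 x‖ ^ 2 = ∑ i, x i ^ 2 := by
  simp [EuclideanSpace.real_norm_sq_eq]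

theorem EuclideanSpace.norm_toLp {ι : Type*} [Fintype ι] (x : ι → ℝ) :
    ‖WithLp.toLp 2 x‖ = √(∑ i, x i ^ 2) := by
  rw [← norm_toLp_sq, Real.sqrt_sq (norm_nonneg _)]

/-- Truncating `v̂` to its `k` largest coordinates and renormalising at most doubles the loss:
`L(v̂₀, v) ≤ 2 L(v̂, v)` for any `k`-sparse unit vector `v`. -/
theorem stmt_13 (p k : ℕ) (vhat : Fin p → ℝ) (hvhat : ∑ i, vhat i ^ 2 = 1)
    (Shat : Finset (Fin p)) (hcard : Shat.card = k)
    (htop : ∀ i ∈ Shat, ∀ j ∉ Shat, |vhat j| ≤ |vhat i|)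
    (w : Fin p → ℝ) (hw : w = fun j => if j ∈ Shat then vhat j else 0)
    (hwne : w ≠ 0)
    (vhat0 : Fin p → ℝ) (hvhat0 : vhat0 = (Real.sqrt (∑ i, w i ^ 2))⁻¹ • w)
    (v : Fin p → ℝ) (hv : ∑ i, v i ^ 2 = 1)
    (hv0 : (Finset.univ.filter (fun j => v j ≠ 0)).card ≤ k) :
    Real.sqrt (1 - (∑ i, vhat0 i * v i) ^ 2)
      ≤ 2 * Real.sqrt (1 - (∑ i, vhat i * v i) ^ 2) := by
  set W := WithLp.toLp 2 w
  set X := WithLp.toLp 2 vhat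
  set V := WithLp.toLp 2 v
  have hX : ‖X‖ = 1 := by rw [EuclideanSpace.norm_toLp, hvhat, Real.sqrt_one]
  have hV : ‖V‖ = 1 := by rw [EuclideanSpace.norm_toLp, hv, Real.sqrt_one]
  have hW0 : W ≠ 0 := fun h => hwne (WithLp.toLp_injective 2 h)
  have hX0 : WithLp.toLp 2 vhat0 = ‖W‖⁻¹ • W := by
    rw [hvhat0, ← EuclideanSpace.norm_toLp, WithLp.toLp_smul]
  have hWX : ⟪W, X⟫ = ‖W‖ ^ 2 := by
    rw [← EuclideanSpace.sum_mul_eq_inner_toLp, EuclideanSpace.norm_toLp_sq, hw]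
    refine sum_congr rfl fun i _ => ?_
    dsimp only
    split_ifs <;> ring
  have hXV : ⟪X, V⟫ ^ 2 ≤ ‖W‖ ^ 2 := by
    have hsparse := sq_sum_mul_le_of_card_support_le (hcard ▸ hv0) htop
    rw [hv, mul_one] at hsparse
    rw [← EuclideanSpace.sum_mul_eq_inner_toLp, EuclideanSpace.norm_toLp_sq, hw]
    simpa [sum_ite_mem] using hsparse
  rw [EuclideanSpace.sum_mul_eq_inner_toLp, EuclideanSpace.sum_mul_eq_inner_toLp, hX0]
  calc √(1 - ⟪‖W‖⁻¹ • W, V⟫ ^ 2)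
      ≤ √(1 - ⟪‖W‖⁻¹ • W, X⟫ ^ 2) + √(1 - ⟪X, V⟫ ^ 2) :=
        sqrt_one_sub_sq_real_inner_le_add (norm_smul_inv_norm hW0) hX hV
    _ ≤ 2 * √(1 - ⟪X, V⟫ ^ 2) := by
        rw [real_inner_inv_norm_smul_eq_norm hWX]
        linarith [Real.sqrt_le_sqrt (sub_le_sub_left hXV 1)]
end

section
/- Let α, β ∈ (0,1) and k, p ∈ ℕ with k ≤ αβp. Then there exists a family 𝒮₀ of k-element subsets of {1,…,p} (equivalently, binary vectors with exactly k ones) such that any two distinct members of 𝒮₀ have Hamming distance at least 2(1-α)k, and log|𝒮₀| ≥ ρ·k·log(p/k), where ρ := (α/(-log(αβ)))·(-log β + β - 1). -/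
/-!
A maximal family `S` of `k`-subsets of `Fin p` with pairwise intersections smaller than
`m = ⌊αk⌋ + 1` is also covering: every `k`-set meets some member of `S` in at least `m` points.
Hence `C(p, k)` is at most `|S|` times the size of a ball `{t : m ≤ |t ∩ s|}`. A Chernoff bound
for the hypergeometric distribution controls the ball: expanding
`x ^ |t ∩ s| = ∑_{u ⊆ t ∩ s} (x - 1) ^ |u|` and using that a random `k`-set contains a fixed
`j`-set with probability at most `(k/p) ^ j` gives `E x ^ |t ∩ s| ≤ (1 + (k/p)(x - 1)) ^ k`, and the
optimal `x` makes `x ^ m / (1 + (k/p)(x - 1)) ^ k` at least `exp (k * bernoulliKL α (k/p))`.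
Finally `bernoulliKL α q ≥ ρ log (1/q)` for `q ≤ αβ` follows from `1 - 1/y ≤ log y`.
-/

open Finset
open scoped symmDiff
open Real

noncomputable def bernoulliKL (a q : ℝ) : ℝ := a * log (a / q) + (1 - a) * log ((1 - a) / (1 - q))

namespace Nat

theorem choose_mul_pow_le_choose_mul_pow {k n : ℕ} (hkn : k ≤ n) (j : ℕ) :
    k.choose j * n ^ j ≤ n.choose j * k ^ j := by
  suffices k.descFactorial j * n ^ j ≤ n.descFactorial j * k ^ j by
    rw [descFactorial_eq_factorial_mul_choose, descFactorial_eq_factorial_mul_choose,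
      mul_assoc, mul_assoc] at this
    exact Nat.le_of_mul_le_mul_left this j.factorial_pos
  induction j with
  | zero => simp
  | succ j ih =>
    have hstep : (k - j) * n ≤ (n - j) * k := by
      rw [Nat.sub_mul, Nat.sub_mul, mul_comm k n]
      exact Nat.sub_le_sub_left (Nat.mul_le_mul_left j hkn) _
    calc k.descFactorial (j + 1) * n ^ (j + 1)
        = ((k - j) * n) * (k.descFactorial j * n ^ j) := by
          rw [descFactorial_succ, pow_succ]; ring
      _ ≤ ((n - j) * k) * (n.descFactorial j * k ^ j) := Nat.mul_le_mul hstep ih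
      _ = n.descFactorial (j + 1) * k ^ (j + 1) := by
          rw [descFactorial_succ, pow_succ]; ring

theorem choose_sub_mul_pow_le {j k n : ℕ} (hjk : j ≤ k) (hkn : k ≤ n) :
    (n - j).choose (k - j) * n ^ j ≤ n.choose k * k ^ j := by
  refine Nat.le_of_mul_le_mul_left ?_ (Nat.choose_pos (hjk.trans hkn))
  calc n.choose j * ((n - j).choose (k - j) * n ^ j)
      = n.choose k * (k.choose j * n ^ j) := by rw [← mul_assoc, ← Nat.choose_mul hjk]; ring
    _ ≤ n.choose k * (n.choose j * k ^ j) :=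
        Nat.mul_le_mul_left _ (choose_mul_pow_le_choose_mul_pow hkn j)
    _ = n.choose j * (n.choose k * k ^ j) := by ring

end Nat

namespace Finset

theorem card_symmDiff_add_two_mul_card_inter {α : Type*} [DecidableEq α] (s t : Finset α) :
    #(s ∆ t) + 2 * #(s ∩ t) = #s + #t := by
  have hunion := card_union_add_card_inter s t
  have hinter := card_le_card (inter_subset_union (s := s) (t := t))
  rw [symmDiff_eq_sup_sdiff_inf, sup_eq_union, inf_eq_inter,
    card_sdiff_of_subset inter_subset_union]
  omega

theorem exists_pairwise_not_rel_forall_exists_rel {α : Type*} (A : Finset α)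
    (r : α → α → Prop) (hsymm : ∀ a b, r a b → r b a) (hrefl : ∀ a ∈ A, r a a) :
    ∃ S ⊆ A, (S : Set α).Pairwise (fun s t => ¬ r s t) ∧ ∀ a ∈ A, ∃ s ∈ S, r s a := by
  classical
  obtain ⟨S, hS, hmax⟩ := (A.powerset.filter fun S : Finset α =>
    (S : Set α).Pairwise (fun s t => ¬ r s t)).exists_max_image card ⟨∅, by simp⟩
  rw [mem_filter, mem_powerset] at hS
  refine ⟨S, hS.1, hS.2, fun a ha => ?_⟩
  by_contra! hfar
  have haS : a ∉ S := fun h => hfar a h (hrefl a ha)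
  have hins : (insert a S : Set α).Pairwise (fun s t => ¬ r s t) :=
    hS.2.insert fun b hb _ => ⟨fun h => hfar b hb (hsymm _ _ h), hfar b hb⟩
  have hcard := hmax (insert a S) (mem_filter.2 ⟨mem_powerset.2 (insert_subset ha hS.1), by simpa⟩)
  rw [card_insert_of_notMem haS] at hcard
  omega

variable {ι : Type*} [Fintype ι] [DecidableEq ι]

theorem card_filter_powersetCard_subset_mul_pow_le {k : ℕ} (hk : k ≤ Fintype.card ι)
    (u : Finset ι) :
    #{t ∈ powersetCard k univ | u ⊆ t} * Fintype.card ι ^ #u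
      ≤ (Fintype.card ι).choose k * k ^ #u := by
  by_cases huk : #u ≤ k
  · rw [card_filter_powersetCard_subset u univ k (subset_univ u) huk, card_univ]
    exact Nat.choose_sub_mul_pow_le huk hk
  · rw [filter_false_of_mem fun t ht hut =>
      huk ((card_le_card hut).trans (mem_powersetCard.1 ht).2.le)]
    simp

theorem sum_pow_card_inter_le [Nonempty ι] {k : ℕ} (hk : k ≤ Fintype.card ι)
    (s : Finset ι) {x : ℝ} (hx : 1 ≤ x) :
    ∑ t ∈ powersetCard k univ, x ^ #(t ∩ s)
      ≤ (Fintype.card ι).choose k * (1 + k / Fintype.card ι * (x - 1)) ^ #s := by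
  set n := Fintype.card ι
  have hn : (0 : ℝ) < n := by exact_mod_cast Fintype.card_pos
  have hcount (u : Finset ι) :
      (#{t ∈ powersetCard k univ | u ⊆ t} : ℝ) ≤ n.choose k * (k / n) ^ #u := by
    rw [div_pow, ← mul_div_assoc, le_div_iff₀ (by positivity)]
    exact_mod_cast card_filter_powersetCard_subset_mul_pow_le hk u
  calc ∑ t ∈ powersetCard k univ, x ^ #(t ∩ s)
      = ∑ t ∈ powersetCard k univ, ∑ u ∈ s.powerset with u ⊆ t, (x - 1) ^ #u := by
        refine sum_congr rfl fun t _ => ?_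
        have hpow : (t ∩ s).powerset = {u ∈ s.powerset | u ⊆ t} := by
          ext u; simp only [mem_powerset, mem_filter, subset_inter_iff]; tauto
        rw [← hpow]
        conv_lhs => rw [← sub_add_cancel x 1, ← sum_pow_mul_eq_add_pow]
        simp
    _ = ∑ u ∈ s.powerset, (#{t ∈ powersetCard k univ | u ⊆ t} : ℝ) * (x - 1) ^ #u := by
        simp_rw [sum_filter]
        rw [sum_comm]
        simp [sum_ite]
    _ ≤ ∑ u ∈ s.powerset, n.choose k * (k / n) ^ #u * (x - 1) ^ #u := by
        gcongr with u
        exact hcount u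
    _ = n.choose k * (1 + k / n * (x - 1)) ^ #s := by
        rw [add_comm, ← sum_pow_mul_eq_add_pow, mul_sum]
        simp [mul_pow, mul_assoc]

theorem card_filter_le_card_inter_mul_pow_le [Nonempty ι] {k m : ℕ}
    (hk : k ≤ Fintype.card ι) (s : Finset ι) {x : ℝ} (hx : 1 ≤ x) :
    #{t ∈ powersetCard k univ | m ≤ #(t ∩ s)} * x ^ m
      ≤ (Fintype.card ι).choose k * (1 + k / Fintype.card ι * (x - 1)) ^ #s := by
  calc #{t ∈ powersetCard k univ | m ≤ #(t ∩ s)} * x ^ m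
      = ∑ t ∈ powersetCard k univ with m ≤ #(t ∩ s), x ^ m := by
        rw [sum_const, nsmul_eq_mul]
    _ ≤ ∑ t ∈ powersetCard k univ with m ≤ #(t ∩ s), x ^ #(t ∩ s) :=
        sum_le_sum fun t ht => pow_le_pow_right₀ hx (mem_filter.1 ht).2
    _ ≤ ∑ t ∈ powersetCard k univ, x ^ #(t ∩ s) :=
        sum_le_sum_of_subset_of_nonneg (filter_subset _ _) fun _ _ _ => by positivity
    _ ≤ _ := sum_pow_card_inter_le hk s hx

theorem exists_packing_powersetCard [Nonempty ι] {k m : ℕ} (hmk : m ≤ k)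
    (hk : k ≤ Fintype.card ι) {x : ℝ} (hx : 1 ≤ x) :
    ∃ S : Finset (Finset ι), S ⊆ powersetCard k univ ∧
      (S : Set (Finset ι)).Pairwise (fun s t => #(s ∩ t) < m) ∧
      x ^ m ≤ #S * (1 + k / Fintype.card ι * (x - 1)) ^ k := by
  set n := Fintype.card ι
  set T : Finset (Finset ι) := powersetCard k univ
  set y := 1 + k / n * (x - 1)
  obtain ⟨S, hST, hpack, hcover⟩ := exists_pairwise_not_rel_forall_exists_rel T
    (fun s t => m ≤ #(s ∩ t)) (fun s t h => by rwa [inter_comm])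
    (fun t ht => by rwa [inter_self, (mem_powersetCard.1 ht).2])
  refine ⟨S, hST, fun s hs t ht hst => not_le.1 (hpack hs ht hst), ?_⟩
  have hcovered : n.choose k ≤ ∑ s ∈ S, #{t ∈ T | m ≤ #(t ∩ s)} := by
    calc n.choose k = #T := by rw [card_powersetCard, card_univ]
      _ ≤ #(S.biUnion fun s => {t ∈ T | m ≤ #(t ∩ s)}) := card_le_card fun t ht => by
          obtain ⟨s, hs, hst⟩ := hcover t ht
          exact mem_biUnion.2 ⟨s, hs, mem_filter.2 ⟨ht, by rwa [inter_comm]⟩⟩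
      _ ≤ _ := card_biUnion_le
  have hball : ∀ s ∈ S, #{t ∈ T | m ≤ #(t ∩ s)} * x ^ m ≤ n.choose k * y ^ k := fun s hs => by
    simpa [(mem_powersetCard.1 (hST hs)).2] using card_filter_le_card_inter_mul_pow_le hk s hx
  have hchoose : (0 : ℝ) < n.choose k := by exact_mod_cast Nat.choose_pos hk
  refine le_of_mul_le_mul_left ?_ hchoose
  calc n.choose k * x ^ m ≤ (∑ s ∈ S, (#{t ∈ T | m ≤ #(t ∩ s)} : ℝ)) * x ^ m := by
        gcongr; exact_mod_cast hcovered
    _ ≤ ∑ s ∈ S, (n.choose k : ℝ) * y ^ k := by rw [sum_mul]; exact sum_le_sum hball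
    _ = n.choose k * (#S * y ^ k) := by rw [sum_const, nsmul_eq_mul]; ring

theorem exists_packing_powersetCard_mul_bernoulliKL_le_log_card [Nonempty ι] {k : ℕ}
    {a : ℝ} (hk : 1 ≤ k) (ha : a < 1) (hka : (k : ℝ) / Fintype.card ι < a) :
    ∃ S : Finset (Finset ι), S ⊆ powersetCard k univ ∧
      (∀ s ∈ S, ∀ t ∈ S, s ≠ t → (#(s ∩ t) : ℝ) ≤ a * k) ∧
      k * bernoulliKL a (k / Fintype.card ι) ≤ log #S := by
  set q : ℝ := k / Fintype.card ι with hq_def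
  have hk0 : (0 : ℝ) < k := by exact_mod_cast hk
  have hq : 0 < q := by positivity
  have ha0 : 0 < a := hq.trans hka
  have hkn : k ≤ Fintype.card ι := by
    have := (div_lt_one (by exact_mod_cast Fintype.card_pos)).1 (hka.trans ha)
    exact_mod_cast this.le
  have hak : 0 ≤ a * k := by positivity
  set m := ⌊a * k⌋₊ + 1
  have hmk : m ≤ k := (Nat.floor_lt hak).2 (by nlinarith)
  set r := (1 - q) / (1 - a)
  have hr : 0 < r := div_pos (by linarith) (by linarith)
  -- the maximiser of `x ^ (a * k) / (1 + q * (x - 1)) ^ k`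
  set x := a / q * r
  have hx : 1 ≤ x := by
    simp only [x, r]; rw [div_mul_div_comm, one_le_div (by nlinarith)]; nlinarith
  obtain ⟨S, hST, hpack, hpow⟩ := exists_packing_powersetCard hmk hkn hx
  refine ⟨S, hST, fun s hs t ht hst => ?_, ?_⟩
  · exact (Nat.le_floor_iff hak).1 (Nat.lt_succ_iff.1 (hpack hs ht hst))
  have hy : 1 + q * (x - 1) = r := by
    have : 1 - a ≠ 0 := by linarith
    simp only [x, r]; field_simp; ring
  rw [← hq_def, hy] at hpow
  have hS : (0 : ℝ) < #S :=
    pos_of_mul_pos_left ((pow_pos (by linarith) m).trans_le hpow) (by positivity)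
  calc k * bernoulliKL a q = a * k * log x - k * log r := by
        rw [bernoulliKL, ← inv_div (1 - q), log_inv, log_mul (by positivity) hr.ne']; ring
    _ ≤ m * log x - k * log r := by
        gcongr
        · exact log_nonneg hx
        · exact_mod_cast (Nat.lt_floor_add_one _).le
    _ = log (x ^ m) - log (r ^ k) := by rw [log_pow, log_pow]
    _ ≤ log #S := by
        rw [sub_le_iff_le_add, ← log_mul hS.ne' (by positivity)]
        exact log_le_log (by positivity) hpow

end Finset

theorem div_neg_log_mul_le {α β : ℝ} (hα0 : 0 < α) (hα1 : α < 1) (hβ0 : 0 < β) (hβ1 : β < 1) :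
    α / -log (α * β) * (-log β + β - 1) ≤ α * (1 - β) := by
  have hL : 0 < -log (α * β) := neg_pos.2 (log_neg (by positivity) (by nlinarith))
  have hlogα : 0 < -log α := neg_pos.2 (log_neg hα0 hα1)
  have hβlogβ : β - 1 ≤ β * log β := by
    have := mul_le_mul_of_nonneg_left (one_sub_inv_le_log_of_pos hβ0) hβ0.le
    rwa [mul_sub, mul_inv_cancel₀ hβ0.ne', mul_one] at this
  rw [div_mul_eq_mul_div, div_le_iff₀ hL, mul_assoc, log_mul hα0.ne' hβ0.ne']
  gcongr
  nlinarith [mul_pos (sub_pos.2 hβ1) hlogα]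

theorem mul_neg_log_le_bernoulliKL {α β q : ℝ} (hα0 : 0 < α) (hα1 : α < 1) (hβ0 : 0 < β)
    (hβ1 : β < 1) (hq : 0 < q) (hqαβ : q ≤ α * β) :
    α / -log (α * β) * (-log β + β - 1) * -log q ≤ bernoulliKL α q := by
  have hαβ : 0 < α * β := by positivity
  have hq1 : q < 1 := hqαβ.trans_lt (by nlinarith)
  set L := -log (α * β)
  set ρ := α / L * (-log β + β - 1)
  set D := log (α * β) - log q with hD_def
  have hL : 0 < L := neg_pos.2 (log_neg hαβ (by nlinarith))
  have hρL : ρ * L = α * (-log β + β - 1) := by simp only [ρ]; field_simp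
  have hD : 0 ≤ D := sub_nonneg.2 (log_le_log hq hqαβ)
  have hαβD : α * β - q ≤ α * β * D := by
    have := one_sub_inv_le_log_of_pos (div_pos hαβ hq)
    rw [inv_div, log_div hαβ.ne' hq.ne'] at this
    calc α * β - q = α * β * (1 - q / (α * β)) := by field_simp
      _ ≤ α * β * D := by gcongr
  have h1α : q - α ≤ (1 - α) * log ((1 - α) / (1 - q)) := by
    have := one_sub_inv_le_log_of_pos (div_pos (sub_pos.2 hα1) (sub_pos.2 hq1))
    rw [inv_div] at this
    calc q - α = (1 - α) * (1 - (1 - q) / (1 - α)) := by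
          field_simp [(sub_pos.2 hα1).ne']; ring
      _ ≤ (1 - α) * log ((1 - α) / (1 - q)) := by gcongr
  calc ρ * -log q = ρ * L + ρ * D := by simp only [L, D]; ring
    _ ≤ α * (-log β + β - 1) + α * (1 - β) * D := by
        rw [hρL]; gcongr; exact div_neg_log_mul_le hα0 hα1 hβ0 hβ1
    _ ≤ α * (log α - log q) + (q - α) := by
        rw [hD_def, log_mul hα0.ne' hβ0.ne'] at hαβD ⊢
        linear_combination hαβD
    _ ≤ bernoulliKL α q := by
        rw [bernoulliKL, log_div hα0.ne' hq.ne']; linarith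

/-- Gilbert–Varshamov variant: there is a family of `k`-subsets of `{1,…,p}` of log-cardinality
at least `ρ k log(p/k)` with pairwise Hamming distance at least `2(1-α)k`. -/
theorem stmt_17 (α β : ℝ) (hα : α ∈ Set.Ioo (0:ℝ) 1) (hβ : β ∈ Set.Ioo (0:ℝ) 1)
    (k p : ℕ) (hk : 1 ≤ k) (hkp : (k : ℝ) ≤ α * β * p) :
    ∃ 𝒮₀ : Finset (Finset (Fin p)),
      (∀ s ∈ 𝒮₀, s.card = k) ∧
      (∀ s ∈ 𝒮₀, ∀ t ∈ 𝒮₀, s ≠ t → 2 * (1 - α) * k ≤ ((s ∆ t).card : ℝ)) ∧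
      (α / (-Real.log (α * β))) * (-Real.log β + β - 1) * k * Real.log (p / k)
        ≤ Real.log (𝒮₀.card) := by
  obtain ⟨hα0, hα1⟩ := hα
  obtain ⟨hβ0, hβ1⟩ := hβ
  have hk0 : (0 : ℝ) < k := by exact_mod_cast hk
  have hp : (0 : ℝ) < p := pos_of_mul_pos_right (hk0.trans_le hkp) (by positivity)
  have hq : (k : ℝ) / p ≤ α * β := div_le_of_le_mul₀ hp.le (by positivity) hkp
  have : Nonempty (Fin p) := ⟨⟨0, by exact_mod_cast hp⟩⟩
  obtain ⟨S, hS, hinter, hlog⟩ := exists_packing_powersetCard_mul_bernoulliKL_le_log_card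
    (ι := Fin p) hk hα1 (by simpa using hq.trans_lt (mul_lt_of_lt_one_right hα0 hβ1))
  simp only [Fintype.card_fin] at hlog
  refine ⟨S, fun s hs => (mem_powersetCard.1 (hS hs)).2, fun s hs t ht hst => ?_, ?_⟩
  · have hcard := card_symmDiff_add_two_mul_card_inter s t
    rw [(mem_powersetCard.1 (hS hs)).2, (mem_powersetCard.1 (hS ht)).2] at hcard
    have hcardR : (#(s ∆ t) : ℝ) + 2 * #(s ∩ t) = k + k := by exact_mod_cast hcard
    linarith [hinter s hs t ht hst]
  · have hlog_inv : log (p / k) = -log (k / p) := by rw [← log_inv, inv_div]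
    calc _ = k * (α / -log (α * β) * (-log β + β - 1) * -log (k / p)) := by
          rw [hlog_inv]; ring
      _ ≤ k * bernoulliKL α (k / p) := by
          gcongr; exact mul_neg_log_le_bernoulliKL hα0 hα1 hβ0 hβ1 (by positivity) hq
      _ ≤ _ := hlog
end
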